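/- The infimum over continuous non-decreasing functions g: ℝ → ℝ of W₂²(g#μ, ν), with μ = U([-1,1]) and ν = ½U([-2,-1]) + ½U([1,2]), equals 0 but is not attained; i.e., the problem argmin_{g continuous non-decreasing} W₂²(g#μ, ν) has no solution. -/

import Mathlib

open Set MeasureTheory
open scoped ENNReal

/-- Squared 2-Wasserstein cost between measures on ℝ. -/
noncomputable def W2sq (ρ₁ ρ₂ : MeasureTheory.Measure ℝ) : ℝ≥0∞ :=
  ⨅ π ∈ {π : MeasureTheory.Measure (ℝ × ℝ) |
      π.map Prod.fst = ρ₁ ∧ π.map Prod.snd = ρ₂},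
    ∫⁻ q, ENNReal.ofReal ((q.1 - q.2) ^ 2) ∂π

/-- The uniform probability measure on [-1,1]. -/
noncomputable def muUnif : MeasureTheory.Measure ℝ :=
  (2 : ℝ≥0∞)⁻¹ • MeasureTheory.volume.restrict (Set.Icc (-1 : ℝ) 1)

/-- The measure ½ U([-2,-1]) + ½ U([1,2]). -/
noncomputable def nuTarget : MeasureTheory.Measure ℝ :=
  (2 : ℝ≥0∞)⁻¹ • MeasureTheory.volume.restrict (Set.Icc (-2 : ℝ) (-1)) +
  (2 : ℝ≥0∞)⁻¹ • MeasureTheory.volume.restrict (Set.Icc (1 : ℝ) 2)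

/-! The map sending `x` to `x - 1` for `x ≤ 0` and to `x + 1` for `x > 0` pushes `μ` forward to
`ν`, and a continuous monotone map agreeing with it outside `(-δ, δ)` is coupled to it at cost
`O(δ)`; hence the infimum is `0`.

Conversely, a continuous `g` maps `[-1, 1]` onto an interval. If that interval meets
`(-1/2, 1/2)`, then `g#μ` gives positive mass to this region, where `ν` has no mass. Otherwise it
lies in `(-∞, -1/2]` or in `[1/2, ∞)`, and the half of `ν` on the other side is at distance at
least `1/2` from it. Either way every coupling has cost bounded below by a positive constant. -/

lemma measure_sub_measure_compl_le_prod {α β : Type*} [MeasurableSpace α] [MeasurableSpace β]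
    {π : Measure (α × β)} {ρ₁ : Measure α} {ρ₂ : Measure β} (h₁ : π.map Prod.fst = ρ₁)
    (h₂ : π.map Prod.snd = ρ₂) {A : Set α} {B : Set β} (hA : MeasurableSet A)
    (hB : MeasurableSet B) :
    ρ₁ A - ρ₂ Bᶜ ≤ π (A ×ˢ B) := by
  rw [tsub_le_iff_right, ← h₁, ← h₂, Measure.map_apply measurable_fst hA,
    Measure.map_apply measurable_snd hB.compl]
  calc π (Prod.fst ⁻¹' A) ≤ π (A ×ˢ B ∪ Prod.snd ⁻¹' Bᶜ) :=
        measure_mono fun q hq => (em (q.2 ∈ B)).imp (fun hqB => ⟨hq, hqB⟩) id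
    _ ≤ π (A ×ˢ B) + π (Prod.snd ⁻¹' Bᶜ) := measure_union_le _ _

lemma W2sq_map_le_lintegral {Ω : Type*} [MeasurableSpace Ω] (μ : Measure Ω) {f T : Ω → ℝ}
    (hf : Measurable f) (hT : Measurable T) :
    W2sq (μ.map f) (μ.map T) ≤ ∫⁻ x, ENNReal.ofReal ((f x - T x) ^ 2) ∂μ := by
  have hfT : Measurable fun x => (f x, T x) := hf.prodMk hT
  calc W2sq (μ.map f) (μ.map T)
      ≤ ∫⁻ q, ENNReal.ofReal ((q.1 - q.2) ^ 2) ∂(μ.map fun x => (f x, T x)) :=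
        iInf₂_le _ ⟨by rw [Measure.map_map measurable_fst hfT]; rfl,
          by rw [Measure.map_map measurable_snd hfT]; rfl⟩
    _ = ∫⁻ x, ENNReal.ofReal ((f x - T x) ^ 2) ∂μ := lintegral_map (by fun_prop) hfT

lemma ofReal_mul_le_W2sq {ρ₁ ρ₂ : Measure ℝ} {A B : Set ℝ} (hA : MeasurableSet A)
    (hB : MeasurableSet B) {r : ℝ} (hr : ∀ x ∈ A, ∀ y ∈ B, r ≤ (x - y) ^ 2) :
    ENNReal.ofReal r * (ρ₁ A - ρ₂ Bᶜ) ≤ W2sq ρ₁ ρ₂ := by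
  refine le_iInf₂ fun π ⟨h₁, h₂⟩ => ?_
  calc ENNReal.ofReal r * (ρ₁ A - ρ₂ Bᶜ)
      ≤ ENNReal.ofReal r * π (A ×ˢ B) := by
        gcongr; exact measure_sub_measure_compl_le_prod h₁ h₂ hA hB
    _ = ∫⁻ q, (A ×ˢ B).indicator (fun _ => ENNReal.ofReal r) q ∂π :=
        (lintegral_indicator_const (hA.prod hB) _).symm
    _ ≤ ∫⁻ q, ENNReal.ofReal ((q.1 - q.2) ^ 2) ∂π :=
        lintegral_mono fun q => indicator_apply_le'
          (fun hq => ENNReal.ofReal_le_ofReal (hr _ hq.1 _ hq.2)) fun _ => zero_le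

lemma W2sq_pos_of_separated {ρ₁ ρ₂ : Measure ℝ} {A B : Set ℝ} (hA : MeasurableSet A)
    (hB : MeasurableSet B) {r : ℝ} (hr : ∀ x ∈ A, ∀ y ∈ B, r ≤ (x - y) ^ 2) (hr₀ : 0 < r)
    (hlt : ρ₂ Bᶜ < ρ₁ A) : 0 < W2sq ρ₁ ρ₂ :=
  (ENNReal.mul_pos (ENNReal.ofReal_pos.2 hr₀).ne' (tsub_pos_of_lt hlt).ne').trans_le
    (ofReal_mul_le_W2sq hA hB hr)

lemma muUnif_apply {s : Set ℝ} (hs : MeasurableSet s) :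
    muUnif s = 2⁻¹ * volume (s ∩ Icc (-1) 1) := by
  simp [muUnif, Measure.restrict_apply hs]

lemma nuTarget_apply {s : Set ℝ} (hs : MeasurableSet s) :
    nuTarget s = 2⁻¹ * volume (s ∩ Icc (-2) (-1)) + 2⁻¹ * volume (s ∩ Icc 1 2) := by
  simp [nuTarget, Measure.restrict_apply hs]

noncomputable def jumpMap (x : ℝ) : ℝ := if x ≤ 0 then x - 1 else x + 1

lemma measurable_jumpMap : Measurable jumpMap :=
  Measurable.ite measurableSet_Iic (measurable_id.sub_const 1) (measurable_id.add_const 1)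

lemma map_add_const_volume_restrict_Icc (a b c : ℝ) :
    (volume.restrict (Icc a b)).map (· + c) = volume.restrict (Icc (a + c) (b + c)) := by
  have h := ((measurePreserving_add_right volume c).restrict_preimage
    (measurableSet_Icc (a := a + c) (b := b + c))).map_eq
  rwa [preimage_add_const_Icc, add_sub_cancel_right, add_sub_cancel_right] at h

lemma map_jumpMap_muUnif : muUnif.map jumpMap = nuTarget := by
  have hsplit : volume.restrict (Icc (-1 : ℝ) 1)
      = volume.restrict (Icc (-1 : ℝ) 0) + volume.restrict (Ioc (0 : ℝ) 1) := by
    rw [← Measure.restrict_union ((Iic_disjoint_Ioc le_rfl).mono_left Icc_subset_Iic_self)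
      measurableSet_Ioc, Icc_union_Ioc_eq_Icc (by norm_num) (by norm_num)]
  have hleft : (volume.restrict (Icc (-1 : ℝ) 0)).map jumpMap
      = volume.restrict (Icc (-2 : ℝ) (-1)) := by
    rw [Measure.map_congr (g := (· + -1)), map_add_const_volume_restrict_Icc]
    · norm_num
    filter_upwards [ae_restrict_mem measurableSet_Icc] with x hx
    simp [jumpMap, hx.2, sub_eq_add_neg]
  have hright : (volume.restrict (Ioc (0 : ℝ) 1)).map jumpMap
      = volume.restrict (Icc (1 : ℝ) 2) := by
    rw [Measure.map_congr (g := (· + 1)), Measure.restrict_congr_set Ioc_ae_eq_Icc,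
      map_add_const_volume_restrict_Icc]
    · norm_num
    filter_upwards [ae_restrict_mem measurableSet_Ioc] with x hx
    simp [jumpMap, not_le.2 hx.1]
  rw [muUnif, Measure.map_smul, hsplit, Measure.map_add _ _ measurable_jumpMap, hleft, hright,
    nuTarget, smul_add]

noncomputable def jumpMapApprox (δ x : ℝ) : ℝ := x + max (-1) (min 1 (x / δ))

lemma continuous_jumpMapApprox (δ : ℝ) : Continuous (jumpMapApprox δ) := by
  unfold jumpMapApprox; fun_prop

lemma monotone_jumpMapApprox {δ : ℝ} (hδ : 0 < δ) : Monotone (jumpMapApprox δ) :=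
  fun _ _ hab => add_le_add hab (max_le_max le_rfl (min_le_min le_rfl
    (div_le_div_of_nonneg_right hab hδ.le)))

lemma jumpMapApprox_eq_jumpMap {δ x : ℝ} (hδ : 0 < δ) (hx : x ∉ Ioo (-δ) δ) :
    jumpMapApprox δ x = jumpMap x := by
  rw [mem_Ioo, not_and_or, not_lt, not_lt] at hx
  rcases hx with hx | hx
  · have : x / δ ≤ -1 := by rw [div_le_iff₀ hδ]; linarith
    rw [jumpMapApprox, jumpMap, if_pos (by linarith), min_eq_right (by linarith),
      max_eq_left this, sub_eq_add_neg]
  · have : 1 ≤ x / δ := by rw [le_div_iff₀ hδ]; linarith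
    rw [jumpMapApprox, jumpMap, if_neg (by linarith), min_eq_left this,
      max_eq_right (by norm_num)]

lemma abs_jumpMapApprox_sub_jumpMap_le (δ x : ℝ) : |jumpMapApprox δ x - jumpMap x| ≤ 2 := by
  have h₁ : -1 ≤ max (-1) (min 1 (x / δ)) := le_max_left _ _
  have h₂ : max (-1) (min 1 (x / δ)) ≤ 1 := max_le (by norm_num) (min_le_left _ _)
  unfold jumpMapApprox jumpMap
  split_ifs <;> rw [abs_le] <;> constructor <;> linarith

lemma lintegral_jumpMapApprox_sub_jumpMap_sq_le {δ : ℝ} (hδ : 0 < δ) :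
    ∫⁻ x, ENNReal.ofReal ((jumpMapApprox δ x - jumpMap x) ^ 2) ∂muUnif
      ≤ 4 * ENNReal.ofReal δ := by
  have hsq (x : ℝ) : (jumpMapApprox δ x - jumpMap x) ^ 2 ≤ 4 := by
    nlinarith [abs_le.1 (abs_jumpMapApprox_sub_jumpMap_le δ x)]
  calc ∫⁻ x, ENNReal.ofReal ((jumpMapApprox δ x - jumpMap x) ^ 2) ∂muUnif
      ≤ ∫⁻ x, (Ioo (-δ) δ).indicator (fun _ => 4) x ∂muUnif :=
        lintegral_mono fun x => le_indicator_apply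
          (fun _ => (ENNReal.ofReal_le_ofReal (hsq x)).trans_eq (ENNReal.ofReal_ofNat 4))
          fun hx => by rw [jumpMapApprox_eq_jumpMap hδ hx]; simp
    _ = 4 * muUnif (Ioo (-δ) δ) := lintegral_indicator_const measurableSet_Ioo _
    _ ≤ 4 * (2⁻¹ * ENNReal.ofReal (2 * δ)) := by
        rw [muUnif_apply measurableSet_Ioo, two_mul, ← sub_neg_eq_add, ← Real.volume_Ioo]
        gcongr
        exact inter_subset_left
    _ = 4 * ENNReal.ofReal δ := by
        rw [ENNReal.ofReal_mul zero_le_two, ENNReal.ofReal_ofNat,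
          ENNReal.inv_mul_cancel_left two_ne_zero ENNReal.ofNat_ne_top]

lemma iInf_W2sq_le {δ : ℝ} (hδ : 0 < δ) :
    ⨅ g : {g : ℝ → ℝ // Continuous g ∧ Monotone g}, W2sq (muUnif.map g.1) nuTarget
      ≤ 4 * ENNReal.ofReal δ :=
  calc ⨅ g : {g : ℝ → ℝ // Continuous g ∧ Monotone g}, W2sq (muUnif.map g.1) nuTarget
      ≤ W2sq (muUnif.map (jumpMapApprox δ)) (muUnif.map jumpMap) := by
        rw [map_jumpMap_muUnif]
        exact iInf_le (fun g : {g : ℝ → ℝ // Continuous g ∧ Monotone g} => _)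
          ⟨_, continuous_jumpMapApprox δ, monotone_jumpMapApprox hδ⟩
    _ ≤ 4 * ENNReal.ofReal δ :=
        (W2sq_map_le_lintegral _ (continuous_jumpMapApprox δ).measurable
          measurable_jumpMap).trans (lintegral_jumpMapApprox_sub_jumpMap_sq_le hδ)

lemma muUnif_pos_of_isOpen {U : Set ℝ} (hU : IsOpen U) {c : ℝ} (hc : c ∈ Icc (-1 : ℝ) 1)
    (hcU : c ∈ U) : 0 < muUnif U := by
  rw [← closure_Ioo (by norm_num : (-1 : ℝ) ≠ 1), mem_closure_iff] at hc
  rw [muUnif_apply hU.measurableSet]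
  refine ENNReal.mul_pos (by norm_num) (((hU.inter isOpen_Ioo).measure_pos volume
    (hc U hU hcU)).trans_le (measure_mono (inter_subset_inter_right _ Ioo_subset_Icc_self))).ne'

lemma map_muUnif_apply_eq_one {g : ℝ → ℝ} (hg : Measurable g) {A : Set ℝ}
    (hA : MeasurableSet A) (hgA : MapsTo g (Icc (-1) 1) A) : muUnif.map g A = 1 := by
  rw [Measure.map_apply hg hA, muUnif_apply (hg hA), inter_eq_right.2 hgA.subset_preimage,
    Real.volume_Icc]
  norm_num [ENNReal.inv_mul_cancel]

lemma nuTarget_Ioo : nuTarget (Ioo (-1) 1) = 0 := by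
  have h₁ : Ioo (-1 : ℝ) 1 ∩ Icc (-2) (-1) = ∅ :=
    eq_empty_iff_forall_notMem.2 fun x ⟨⟨hx, _⟩, _, hx'⟩ => by linarith
  have h₂ : Ioo (-1 : ℝ) 1 ∩ Icc 1 2 = ∅ :=
    eq_empty_iff_forall_notMem.2 fun x ⟨⟨_, hx⟩, hx', _⟩ => by linarith
  simp [nuTarget_apply measurableSet_Ioo, h₁, h₂]

lemma nuTarget_Iio_one : nuTarget (Iio 1) = 2⁻¹ := by
  have h₁ : Iio (1 : ℝ) ∩ Icc (-2) (-1) = Icc (-2) (-1) :=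
    inter_eq_right.2 fun x ⟨_, hx⟩ => show x < 1 by linarith
  have h₂ : Iio (1 : ℝ) ∩ Icc 1 2 = ∅ :=
    eq_empty_iff_forall_notMem.2 fun x ⟨(hx : x < 1), hx', _⟩ => by linarith
  norm_num [nuTarget_apply measurableSet_Iio, h₁, h₂]

lemma nuTarget_Ioi_neg_one : nuTarget (Ioi (-1)) = 2⁻¹ := by
  have h₁ : Ioi (-1 : ℝ) ∩ Icc (-2) (-1) = ∅ :=
    eq_empty_iff_forall_notMem.2 fun x ⟨(hx : -1 < x), _, hx'⟩ => by linarith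
  have h₂ : Ioi (-1 : ℝ) ∩ Icc 1 2 = Icc 1 2 :=
    inter_eq_right.2 fun x ⟨hx, _⟩ => show -1 < x by linarith
  norm_num [nuTarget_apply measurableSet_Ioi, h₁, h₂]

lemma mapsTo_Iic_or_Ici_of_forall_notMem_Ioo {s : Set ℝ} (hs : IsPreconnected s) {g : ℝ → ℝ}
    (hg : ContinuousOn g s) {a b : ℝ} (hab : a < b) (hgs : ∀ x ∈ s, g x ∉ Ioo a b) :
    MapsTo g s (Iic a) ∨ MapsTo g s (Ici b) := by
  simp only [mapsTo_iff_image_subset]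
  refine isPreconnected_iff_subset_of_disjoint_closed.1 (hs.image g hg) _ _ isClosed_Iic
    isClosed_Ici ?_ ?_
  · rintro _ ⟨x, hx, rfl⟩
    rw [mem_union, mem_Iic, mem_Ici]
    by_contra! h
    exact hgs x hx h
  · exact eq_empty_iff_forall_notMem.2 fun y ⟨_, (hya : y ≤ a), (hyb : b ≤ y)⟩ => by linarith

lemma W2sq_map_muUnif_nuTarget_pos {g : ℝ → ℝ} (hg : Continuous g) :
    0 < W2sq (muUnif.map g) nuTarget := by
  by_cases hmid : ∃ c ∈ Icc (-1 : ℝ) 1, g c ∈ Ioo (-2⁻¹) 2⁻¹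
  · obtain ⟨c, hc, hgc⟩ := hmid
    refine W2sq_pos_of_separated (A := Ioo (-2⁻¹) 2⁻¹) (B := (Ioo (-1) 1)ᶜ) (r := 4⁻¹)
      measurableSet_Ioo measurableSet_Ioo.compl ?_ (by norm_num) ?_
    · intro x ⟨hx₁, hx₂⟩ y hy
      simp only [mem_compl_iff, mem_Ioo, not_and_or, not_lt] at hy
      rcases hy with hy | hy <;> nlinarith
    · rw [compl_compl, nuTarget_Ioo, Measure.map_apply hg.measurable measurableSet_Ioo]
      exact muUnif_pos_of_isOpen (isOpen_Ioo.preimage hg) hc hgc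
  rcases mapsTo_Iic_or_Ici_of_forall_notMem_Ioo isPreconnected_Icc hg.continuousOn
    (by norm_num : (-2⁻¹ : ℝ) < 2⁻¹) fun x hx hgx => hmid ⟨x, hx, hgx⟩ with hneg | hpos
  · refine W2sq_pos_of_separated (r := 4⁻¹) measurableSet_Iic measurableSet_Ici
      (fun x (hx : x ≤ -2⁻¹) y (hy : 1 ≤ y) => by nlinarith) (by norm_num) ?_
    rw [compl_Ici, nuTarget_Iio_one,
      map_muUnif_apply_eq_one hg.measurable measurableSet_Iic hneg]
    exact ENNReal.inv_lt_one.2 ENNReal.one_lt_two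
  · refine W2sq_pos_of_separated (r := 4⁻¹) measurableSet_Ici measurableSet_Iic
      (fun x (hx : 2⁻¹ ≤ x) y (hy : y ≤ -1) => by nlinarith) (by norm_num) ?_
    rw [compl_Iic, nuTarget_Ioi_neg_one,
      map_muUnif_apply_eq_one hg.measurable measurableSet_Ici hpos]
    exact ENNReal.inv_lt_one.2 ENNReal.one_lt_two

/-- The infimum over continuous non-decreasing g of W₂²(g#μ, ν) is 0 but is not
attained: the problem has no solution. -/
theorem inf_zero_not_attained :
    (⨅ g : {g : ℝ → ℝ // Continuous g ∧ Monotone g},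
        W2sq (MeasureTheory.Measure.map g.1 muUnif) nuTarget) = 0 ∧
    ¬ ∃ g : ℝ → ℝ, Continuous g ∧ Monotone g ∧
        W2sq (MeasureTheory.Measure.map g muUnif) nuTarget = 0 := by
  refine ⟨le_antisymm (ENNReal.le_of_forall_pos_le_add fun ε hε _ => ?_) bot_le,
    fun ⟨g, hg, _, h⟩ => (W2sq_map_muUnif_nuTarget_pos hg).ne' h⟩
  calc _ ≤ 4 * ENNReal.ofReal (ε / 4) := iInf_W2sq_le (by positivity)
    _ = 0 + ε := by
      rw [← ENNReal.ofReal_ofNat 4, ← ENNReal.ofReal_mul (by norm_num),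
        mul_div_cancel₀ _ four_ne_zero, ENNReal.ofReal_coe_nnreal, zero_add]
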